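/- (Invariance via local compactness estimates when the flow map is only locally defined) Let (X,d) be a metric space, S: X → X a map, and μ_ε → μ_0 weakly with each μ_ε invariant under S. Suppose for every compact K ⊂ X and every θ > 0 there exists δ > 0 with S(K + B_δ) ⊂ S(K) + B_θ (where K + B_r denotes the open r-neighborhood). Then μ_0(K) ≤ μ_0(closure(S(K) + B_θ)) for every θ > 0; if moreover S is invertible with the same hypotheses for S^{-1}, then μ_0(K) = μ_0(S(K)) for every compact K. -/

import Mathlib

/-!
By the portmanteau inequalities and invariance,
`μ₀ K ≤ μ₀ (K + B_δ) ≤ liminf μₖ (K + B_δ) = liminf μₖ (S (K + B_δ)) ≤ limsup μₖ (closure (S K + B_θ))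
≤ μ₀ (closure (S K + B_θ))`, and letting `θ → 0` gives `μ₀ K ≤ μ₀ (S K)`, as `S` is continuous and
`S K` compact. The reverse inequality is the same estimate for `T` applied to the compact set `S K`.
-/

open MeasureTheory Filter Metric
open scoped Topology
open scoped BoundedContinuousFunction

def ImageThickeningControlled {X Y : Type*} [PseudoMetricSpace X] [PseudoMetricSpace Y]
    (R : X → Y) : Prop :=
  ∀ K : Set X, IsCompact K → ∀ θ : ℝ, 0 < θ → ∃ δ : ℝ, 0 < δ ∧
    R '' (thickening δ K) ⊆ thickening θ (R '' K)

theorem ImageThickeningControlled.continuous {X Y : Type*} [PseudoMetricSpace X]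
    [PseudoMetricSpace Y] {R : X → Y} (hR : ImageThickeningControlled R) : Continuous R := by
  refine Metric.continuous_iff.2 fun b ε hε => ?_
  obtain ⟨δ, hδ, hsub⟩ := hR {b} isCompact_singleton ε hε
  refine ⟨δ, hδ, fun a ha => ?_⟩
  have : R a ∈ thickening ε (R '' {b}) := hsub ⟨a, by simpa [thickening_singleton] using ha, rfl⟩
  simpa [thickening_singleton] using this

theorem le_measure_closure_of_forall_le_measure_closure_thickening {X : Type*}
    [PseudoMetricSpace X] [MeasurableSpace X] [OpensMeasurableSpace X] {μ : Measure X}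
    [IsFiniteMeasure μ] {A : Set X} {a : ENNReal}
    (h : ∀ θ : ℝ, 0 < θ → a ≤ μ (closure (thickening θ A))) : a ≤ μ (closure A) := by
  have hlim : Tendsto (fun r => μ (cthickening r A)) (𝓝[>] 0) (𝓝 (μ (closure A))) :=
    (tendsto_measure_cthickening ⟨1, one_pos, measure_ne_top μ _⟩).mono_left nhdsWithin_le_nhds
  refine ge_of_tendsto hlim (eventually_nhdsWithin_of_forall fun θ hθ => ?_)
  exact (h θ hθ).trans (measure_mono (closure_thickening_subset_cthickening θ A))

section Portmanteau

variable {X ι : Type*} [MetricSpace X] [MeasurableSpace X] [BorelSpace X] {L : Filter ι} [L.NeBot]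
  {μ : ProbabilityMeasure X} {μs : ι → ProbabilityMeasure X} {R : X → X} {K : Set X}

theorem measure_le_measure_closure_thickening_image_of_tendsto (hμs : Tendsto μs L (𝓝 μ))
    (hinv : ∀ i, ∀ A : Set X, MeasurableSet A → (μs i : Measure X) (R '' A) = (μs i : Measure X) A)
    (hR : ImageThickeningControlled R) (hK : IsCompact K) {θ : ℝ} (hθ : 0 < θ) :
    (μ : Measure X) K ≤ (μ : Measure X) (closure (thickening θ (R '' K))) := by
  obtain ⟨δ, hδ, hsub⟩ := hR K hK θ hθ
  calc (μ : Measure X) K ≤ (μ : Measure X) (thickening δ K) :=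
        measure_mono (self_subset_thickening hδ K)
    _ ≤ L.liminf fun i => (μs i : Measure X) (thickening δ K) :=
        ProbabilityMeasure.le_liminf_measure_open_of_tendsto hμs isOpen_thickening
    _ ≤ L.liminf fun i => (μs i : Measure X) (closure (thickening θ (R '' K))) := by
        refine liminf_le_liminf (Eventually.of_forall fun i => ?_)
        rw [← hinv i _ isOpen_thickening.measurableSet]
        exact measure_mono (hsub.trans subset_closure)
    _ ≤ L.limsup fun i => (μs i : Measure X) (closure (thickening θ (R '' K))) :=
        liminf_le_limsup
    _ ≤ (μ : Measure X) (closure (thickening θ (R '' K))) :=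
        ProbabilityMeasure.limsup_measure_closed_le_of_tendsto hμs isClosed_closure

theorem measure_le_measure_image_of_tendsto (hμs : Tendsto μs L (𝓝 μ))
    (hinv : ∀ i, ∀ A : Set X, MeasurableSet A → (μs i : Measure X) (R '' A) = (μs i : Measure X) A)
    (hR : ImageThickeningControlled R) (hK : IsCompact K) :
    (μ : Measure X) K ≤ (μ : Measure X) (R '' K) := by
  have h := le_measure_closure_of_forall_le_measure_closure_thickening fun θ hθ =>
    measure_le_measure_closure_thickening_image_of_tendsto hμs hinv hR hK hθ
  rwa [(hK.image hR.continuous).isClosed.closure_eq] at h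

end Portmanteau

/-- Invariance via local compactness estimates when the flow map is only locally defined:
let `μ_ε → μ_0` weakly with each `μ_ε` invariant under `S` (`μ_ε(S(A)) = μ_ε(A)`), and
suppose for every compact `K` and `θ > 0` there is `δ > 0` with
`S(K + B_δ) ⊆ S(K) + B_θ`.  Then `μ_0(K) ≤ μ_0(closure(S(K) + B_θ))` for every `θ > 0`;
if moreover `S` is invertible with inverse `T` satisfying the same hypotheses, then
`μ_0(K) = μ_0(S(K))` for every compact `K`. -/
theorem invariance_local_flow
    {X : Type*} [MetricSpace X] [MeasurableSpace X] [BorelSpace X]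
    (S T : X → X)
    (μe : ℕ → Measure X) (μ0 : Measure X)
    [∀ k, IsProbabilityMeasure (μe k)] [IsProbabilityMeasure μ0]
    (hw : ∀ f : X →ᵇ ℝ,
      Tendsto (fun k => ∫ x, f x ∂(μe k)) atTop (nhds (∫ x, f x ∂μ0)))
    (hinvS : ∀ k, ∀ A : Set X, MeasurableSet A → μe k (S '' A) = μe k A)
    (hregS : ∀ K : Set X, IsCompact K → ∀ θ : ℝ, 0 < θ → ∃ δ : ℝ, 0 < δ ∧
      S '' (thickening δ K) ⊆ thickening θ (S '' K)) :
    (∀ K : Set X, IsCompact K → ∀ θ : ℝ, 0 < θ →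
      μ0 K ≤ μ0 (closure (thickening θ (S '' K))))
    ∧ (Function.LeftInverse T S → Function.RightInverse T S →
        (∀ k, ∀ A : Set X, MeasurableSet A → μe k (T '' A) = μe k A) →
        (∀ K : Set X, IsCompact K → ∀ θ : ℝ, 0 < θ → ∃ δ : ℝ, 0 < δ ∧
          T '' (thickening δ K) ⊆ thickening θ (T '' K)) →
        ∀ K : Set X, IsCompact K → μ0 K = μ0 (S '' K)) := by
  let P0 : ProbabilityMeasure X := ⟨μ0, inferInstance⟩
  let Pe : ℕ → ProbabilityMeasure X := fun k => ⟨μe k, inferInstance⟩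
  have hμ : Tendsto Pe atTop (𝓝 P0) :=
    ProbabilityMeasure.tendsto_iff_forall_integral_tendsto.mpr hw
  refine ⟨fun K hK θ hθ =>
    measure_le_measure_closure_thickening_image_of_tendsto hμ hinvS hregS hK hθ, ?_⟩
  intro hTS _ hinvT hregT K hK
  have hSK : IsCompact (S '' K) := hK.image (ImageThickeningControlled.continuous hregS)
  refine le_antisymm (measure_le_measure_image_of_tendsto hμ hinvS hregS hK) ?_
  calc μ0 (S '' K) ≤ μ0 (T '' (S '' K)) := measure_le_measure_image_of_tendsto hμ hinvT hregT hSK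
    _ = μ0 K := by rw [hTS.image_image]
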